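/- The positive semidefinite matrices C⁺ and C⁻ appearing in the decomposition Ĉ = (4/3)C⁺ − (1/3)C⁻ have orthogonal supports, i.e., C⁺ · C⁻ = 0. -/

import Mathlib

/-!
On each of its two blocks `C⁺` is `1/3` times the all-ones matrix, so `C⁺ = (1/3)(e eᵀ + o oᵀ)`
with `e`, `o` the indicator vectors of the blocks. Every column of `C⁻` sums to zero over each
block, i.e. `e` and `o` lie in the left kernel of `C⁻`, and hence `C⁺ C⁻ = 0`.
-/

open Matrix Complex

noncomputable section

noncomputable def Cp8 : Matrix (Fin 8) (Fin 8) ℂ :=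
  !![1/3, 0, 0, 1/3, 0, 1/3, 0, 0;
     0, 0, 0, 0, 0, 0, 0, 0;
     0, 0, 1/3, 0, 1/3, 0, 0, 1/3;
     1/3, 0, 0, 1/3, 0, 1/3, 0, 0;
     0, 0, 1/3, 0, 1/3, 0, 0, 1/3;
     1/3, 0, 0, 1/3, 0, 1/3, 0, 0;
     0, 0, 0, 0, 0, 0, 0, 0;
     0, 0, 1/3, 0, 1/3, 0, 0, 1/3]

noncomputable def Cm8 : Matrix (Fin 8) (Fin 8) ℂ :=
  !![1/3, 0, 0, -1/6, 0, -1/6, 0, 0;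
     0, 0, 0, 0, 0, 0, 0, 0;
     0, 0, 1/3, 0, -1/6, 0, 0, -1/6;
     -1/6, 0, 0, 1/3, 0, -1/6, 0, 0;
     0, 0, -1/6, 0, 1/3, 0, 0, -1/6;
     -1/6, 0, 0, -1/6, 0, 1/3, 0, 0;
     0, 0, 0, 0, 0, 0, 0, 0;
     0, 0, -1/6, 0, -1/6, 0, 0, 1/3]

-- Indicators of `{|000⟩, |011⟩, |101⟩}` and `{|010⟩, |100⟩, |111⟩}`; index `k` is `|k⟩` in binary.
def evenBlock : Fin 8 → ℂ := ![1, 0, 0, 1, 0, 1, 0, 0]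

def oddBlock : Fin 8 → ℂ := ![0, 0, 1, 0, 1, 0, 0, 1]

lemma Cp8_eq_smul_add_vecMulVec :
    Cp8 = (1 / 3 : ℂ) • (vecMulVec evenBlock evenBlock + vecMulVec oddBlock oddBlock) := by
  ext i j
  fin_cases i <;> fin_cases j <;> norm_num [Cp8, evenBlock, oddBlock]

lemma evenBlock_vecMul_Cm8 : evenBlock ᵥ* Cm8 = 0 := by
  ext j
  fin_cases j <;> norm_num [evenBlock, Cm8, vecMul, dotProduct, Fin.sum_univ_succ]

lemma oddBlock_vecMul_Cm8 : oddBlock ᵥ* Cm8 = 0 := by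
  ext j
  fin_cases j <;> norm_num [oddBlock, Cm8, vecMul, dotProduct, Fin.sum_univ_succ]

/-- `C⁺` and `C⁻` have orthogonal supports: `C⁺ · C⁻ = 0`. -/
theorem Cp_Cm_orthogonal_supports : Cp8 * Cm8 = 0 := by
  rw [Cp8_eq_smul_add_vecMulVec, smul_mul_assoc, add_mul, vecMulVec_mul, vecMulVec_mul,
    evenBlock_vecMul_Cm8, oddBlock_vecMul_Cm8]
  simp

end
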